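/- Let v₁ = (0,0,0), v₂ = (1000,0,0), v₃ = (437,826,0), v₄ = (82,89,−575), v₅ = (−355,666,115), v₆ = (513,601,−376), v₇ = (248,−212,142), v₈ = (−225,436,−454), v₉ = (513,−238,−456), v₁₀ = (11,534,−846) in ℝ³, and define edge vectors eᵢ = v_{i+1} − vᵢ for i = 1, …, 9 and e₁₀ = v₁ − v₁₀. Then there is no w ∈ ℝ³ such that (−1)^{i+1} (w · eᵢ) > 0 for every i ∈ {1, …, 10}. -/

import Mathlib

/-!
A Gordan certificate: the signed edges `(-1)^i eᵢ` for `i = 1, 2, 3, 8` (paper's indexing)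
have a vanishing combination with positive coefficients, so no linear functional can be
positive on all of them.
-/

/-- The vertices of the paper's 10-stick polygonal realization of the knot `8_3`.
Here `vert8_3 i` is the paper's vertex `v_(i+1)`. -/
noncomputable def vert8_3 : Fin 10 → (Fin 3 → ℝ) :=
  ![![0, 0, 0], ![1000, 0, 0], ![437, 826, 0], ![82, 89, -575], ![-355, 666, 115], ![513, 601, -376], ![248, -212, 142], ![-225, 436, -454], ![513, -238, -456], ![11, 534, -846]]

/-- The edge vectors `eᵢ = v_(i+1) − vᵢ` (cyclically, so `e₁₀ = v₁ − v₁₀`);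
here `edge8_3 i` is the paper's `e_(i+1)`, using wrap-around addition on `Fin 10`. -/
noncomputable def edge8_3 (i : Fin 10) : Fin 3 → ℝ :=
  vert8_3 (i + 1) - vert8_3 i

open Matrix

/-- The easy direction of Gordan's alternative. -/
theorem not_exists_forall_pos_dotProduct_of_sum_smul_eq_zero {ι κ : Type*} [Fintype ι]
    [Fintype κ] {u : ι → κ → ℝ} (c : ι → ℝ) (hc : ∀ i, 0 ≤ c i) (hpos : ∃ i, 0 < c i)
    (hsum : ∑ i, c i • u i = 0) : ¬ ∃ w : κ → ℝ, ∀ i, 0 < w ⬝ᵥ u i := by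
  rintro ⟨w, hw⟩
  obtain ⟨i₀, hi₀⟩ := hpos
  have hpos_sum : 0 < ∑ i, c i * (w ⬝ᵥ u i) :=
    Finset.sum_pos' (fun i _ => mul_nonneg (hc i) (hw i).le)
      ⟨i₀, Finset.mem_univ _, mul_pos hi₀ (hw i₀)⟩
  have hzero_sum : ∑ i, c i * (w ⬝ᵥ u i) = 0 := by
    simp_rw [← smul_eq_mul, ← dotProduct_smul, ← dotProduct_sum, hsum, dotProduct_zero]
  exact hpos_sum.ne' hzero_sum

-- Solves `∑ cᵢ (-1)^i eᵢ = 0` on the support `{0, 1, 2, 7}`: the third coordinate fixes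
-- `c₇ / c₂`, then the second fixes `c₁`, the first `c₀`.
def farkasCoeff8_3 : Fin 10 → ℝ :=
  ![33434693, 96519000, 413000, 0, 0, 0, 0, 118737500, 0, 0]

theorem sum_farkasCoeff8_3_smul_signed_edge8_3_eq_zero :
    ∑ i : Fin 10, farkasCoeff8_3 i •
      ((-1 : ℝ) ^ (i : ℕ) • edge8_3 i) = 0 := by
  ext j
  fin_cases j <;> simp [Fin.sum_univ_succ, farkasCoeff8_3, edge8_3, vert8_3] <;> norm_num

/-- There is no `w ∈ ℝ³` such that `(−1)^(i+1) (w · eᵢ) > 0` for every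
`i ∈ {1, …, 10}`: no projection of this polygon (the knot `8_3`) to a line has
5 local maxima. (With 0-based indexing `i : Fin 10`, the sign is `(−1)^i`.) -/
theorem no_alternating_direction_8_3 :
    ¬ ∃ w : Fin 3 → ℝ, ∀ i : Fin 10,
        0 < (-1 : ℝ) ^ (i : ℕ) * ∑ j : Fin 3, w j * edge8_3 i j := by
  have signed_dot (w : Fin 3 → ℝ) (i : Fin 10) :
      (-1 : ℝ) ^ (i : ℕ) * ∑ j : Fin 3, w j * edge8_3 i j =
        w ⬝ᵥ ((-1 : ℝ) ^ (i : ℕ) • edge8_3 i) := by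
    rw [dotProduct_smul, smul_eq_mul, dotProduct]
  simp_rw [signed_dot]
  refine not_exists_forall_pos_dotProduct_of_sum_smul_eq_zero farkasCoeff8_3 ?_
    ⟨0, by norm_num [farkasCoeff8_3]⟩ sum_farkasCoeff8_3_smul_signed_edge8_3_eq_zero
  intro i
  fin_cases i <;> norm_num [farkasCoeff8_3]
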